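/- Assume π/β ∉ ℤ and w(θ₂⁺) ≠ w(0), where w(θ₂⁺) := cos((π/β)·π) is the limit of w at θ₂⁺. Define φ₁(θ₂) = −μ₁ w′(0) θ₂/(w(θ₂) − w(0)), φ₁(θ₂⁺) = −μ₁ w′(0) θ₂⁺/(w(θ₂⁺) − w(0)), and C₁ = −φ₁(θ₂⁺)·2(π/β)·sin((π/β)·π)/((w(θ₂⁺) − w(0))·√(θ₂⁺ − θ₂⁻)). Then, as θ₂ → θ₂⁺ within ℂ∖[θ₂⁺, ∞), φ₁(θ₂) − φ₁(θ₂⁺) − C₁·√(θ₂⁺ − θ₂) = O(θ₂ − θ₂⁺), where √ is the principal complex square root. -/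

import Mathlib

open Asymptotics Filter

/-- The cut plane `ℂ ∖ (−∞, −1]`. -/
def cutC : Set ℂ := {z : ℂ | z.im = 0 ∧ z.re ≤ -1}ᶜ

/-- `T` is an analytic function on the cut plane `ℂ ∖ (−∞, −1]` agreeing with
`x ↦ cos (a · arccos x)` on `(−1, 1]`. -/
def IsChebyshev (a : ℝ) (T : ℂ → ℂ) : Prop :=
  (∀ z ∈ cutC, DifferentiableAt ℂ T z) ∧
  ∀ x : ℝ, x ∈ Set.Ioc (-1 : ℝ) 1 → T (x : ℂ) = ((Real.cos (a * Real.arccos x) : ℝ) : ℂ)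

/-- The affine map `χ(θ₂) = −(2θ₂ − (θ₂⁺+θ₂⁻))/(θ₂⁺−θ₂⁻)`. -/
noncomputable def chiMap (θ2p θ2m : ℝ) (θ : ℂ) : ℂ :=
  -(2 * θ - ((θ2p : ℂ) + (θ2m : ℂ))) / ((θ2p : ℂ) - (θ2m : ℂ))

/-!
Near `z = -1` put `v = √(1 + z)`, so that `z = v² - 1`. The function
`ψ(v) = π - i log (1 - v² - i v √(2 - v²))` (`arccosSqSubOne`) is analytic at `v = 0` and equals
`arccos (v² - 1)` for small real `v ≥ 0`; by the identity theorem `T z = cos (a ψ (√(1 + z)))` on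
the cut plane near `-1`. The first-order Taylor expansion of `v ↦ cos (a ψ v)` at `0`, where
`ψ 0 = π` and `ψ' 0 = -√2`, gives `T z = cos (a π) + √2 a sin (a π) √(1 + z) + O(1 + z)`. As
`1 + χ θ = 2 (θ₂⁺ - θ) / (θ₂⁺ - θ₂⁻)`, this becomes `w θ = w θ₂⁺ + K √(θ₂⁺ - θ) + O(θ - θ₂⁺)`
with `K = 2 a sin (a π) / √(θ₂⁺ - θ₂⁻)`, and expanding the quotient
`φ₁ θ = -μ₁ w'(0) θ / (w θ - w 0)` to first order in `√(θ₂⁺ - θ)` gives the claim.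
-/

open Complex Topology
open scoped Real

theorem AnalyticAt.isBigO_sub_sub_smul_deriv {𝕜 E : Type*} [NontriviallyNormedField 𝕜]
    [NormedAddCommGroup E] [NormedSpace 𝕜 E] {g : 𝕜 → E} {z₀ : 𝕜} (hg : AnalyticAt 𝕜 g z₀) :
    (fun z => g z - g z₀ - (z - z₀) • deriv g z₀) =O[𝓝 z₀] fun z => (z - z₀) ^ 2 := by
  obtain ⟨p, hp⟩ := hg
  have hslope := hp.has_fpower_series_dslope_fslope.analyticAt.differentiableAt.isBigO_sub
  rw [dslope_same] at hslope
  refine ((isBigO_refl (fun z => z - z₀) _).smul hslope).congr (fun z => ?_) (fun z => by ring)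
  rw [smul_sub, sub_smul_dslope]

namespace Complex

theorem sqrt_sq (z : ℂ) : sqrt z ^ 2 = z := cpow_ofNat_inv_pow z 2

theorem sqrt_re_pos {z : ℂ} (hz : z ∈ slitPlane) : 0 < (sqrt z).re := by
  rw [sqrt, cpow_inv_two_re, Real.sqrt_pos]
  rcases mem_slitPlane_iff.mp hz with h | h
  · linarith [norm_nonneg z]
  · linarith [neg_abs_le z.re, abs_re_lt_norm.mpr h]

theorem sqrt_ofReal {x : ℝ} (hx : 0 ≤ x) : sqrt x = Real.sqrt x := by
  rw [sqrt, ← ofReal_ofNat, ← ofReal_inv, ← ofReal_cpow hx, Real.sqrt_eq_rpow, one_div]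

theorem sqrt_ofReal_mul {c : ℝ} (hc : 0 < c) (z : ℂ) :
    sqrt (c * z) = Real.sqrt c * sqrt z := by
  rcases eq_or_ne z 0 with rfl | hz
  · simp
  have hcz : (c : ℂ) * z ≠ 0 := mul_ne_zero (ofReal_ne_zero.mpr hc.ne') hz
  rw [sqrt_eq_exp hcz, sqrt_eq_exp hz, log_ofReal_mul hc hz, add_div, exp_add,
    ofReal_log hc.le, ← sqrt_eq_exp (ofReal_ne_zero.mpr hc.ne'), sqrt_ofReal hc.le]

theorem tendsto_sqrt_zero : Tendsto sqrt (𝓝 0) (𝓝 0) := by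
  simpa using (continuousAt_sqrt (z := 0) (by simp)).tendsto


theorem ofReal_mul_mem_slitPlane_iff {c : ℝ} (hc : 0 < c) {z : ℂ} :
    (c : ℂ) * z ∈ slitPlane ↔ z ∈ slitPlane := by
  simp [mem_slitPlane_iff, hc, hc.ne']

theorem ofReal_sub_mem_slitPlane_iff {c : ℝ} {z : ℂ} :
    (c : ℂ) - z ∈ slitPlane ↔ z ∈ {w : ℂ | w.im = 0 ∧ c ≤ w.re}ᶜ := by
  change _ ↔ ¬(z.im = 0 ∧ c ≤ z.re)
  rw [mem_slitPlane_iff, sub_re, sub_im, ofReal_re, ofReal_im, zero_sub, neg_ne_zero, sub_pos]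
  by_cases h : z.im = 0 <;> simp [h]

end Complex

noncomputable def arccosSqSubOne (v : ℂ) : ℂ :=
  π - I * log (1 - v ^ 2 - I * v * sqrt (2 - v ^ 2))

theorem arccosSqSubOne_ofReal {t : ℝ} (ht : 0 ≤ t) (ht2 : t ^ 2 < 2) :
    arccosSqSubOne t = Real.arccos (t ^ 2 - 1) := by
  set x := t ^ 2 - 1 with hx
  have hsin : (t : ℂ) * sqrt (2 - t ^ 2) = Real.sin (Real.arccos x) := by
    rw [Real.sin_arccos, show (2 : ℂ) - t ^ 2 = ((2 - t ^ 2 : ℝ) : ℂ) by push_cast; ring,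
      sqrt_ofReal (by linarith), ← ofReal_mul, show 1 - x ^ 2 = t ^ 2 * (2 - t ^ 2) by ring,
      Real.sqrt_mul (sq_nonneg t), Real.sqrt_sq ht]
  have hexp : 1 - (t : ℂ) ^ 2 - I * t * sqrt (2 - t ^ 2) =
      exp (((Real.arccos x - π : ℝ) : ℂ) * I) := by
    rw [exp_mul_I, ← ofReal_cos, ← ofReal_sin, Real.cos_sub_pi, Real.sin_sub_pi,
      Real.cos_arccos (by nlinarith) (by linarith), mul_assoc, hsin, hx]
    push_cast
    ring
  have harccos_pos : 0 < Real.arccos x := Real.arccos_pos.mpr (by linarith)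
  rw [arccosSqSubOne, hexp, log_exp (by simpa using by linarith)
    (by simpa using by linarith [Real.arccos_le_pi x])]
  push_cast
  linear_combination ((π : ℂ) - Real.arccos x) * I_sq

theorem analyticAt_arccosSqSubOne {v : ℂ} (hv : ‖v‖ < 1 / 4) :
    AnalyticAt ℂ arccosSqSubOne v := by
  have hslit : 2 - v ^ 2 ∈ slitPlane := by
    rw [mem_slitPlane_iff, sub_re, re_ofNat]
    left
    nlinarith [re_le_norm (v ^ 2), norm_pow v 2, norm_nonneg v]
  have hsqrt : ‖sqrt (2 - v ^ 2)‖ < 2 := by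
    have h : ‖sqrt (2 - v ^ 2)‖ ^ 2 < 2 ^ 2 := by
      rw [← norm_pow, sqrt_sq]
      nlinarith [norm_sub_le (2 : ℂ) (v ^ 2), (by norm_num : ‖(2 : ℂ)‖ = 2), norm_pow v 2,
        norm_nonneg v]
    exact lt_of_pow_lt_pow_left₀ 2 (by norm_num) h
  have hq : 1 - v ^ 2 - I * v * sqrt (2 - v ^ 2) ∈ slitPlane := by
    have h : ‖-v ^ 2 - I * v * sqrt (2 - v ^ 2)‖ < 1 := by
      calc ‖-v ^ 2 - I * v * sqrt (2 - v ^ 2)‖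
          ≤ ‖v‖ ^ 2 + ‖v‖ * ‖sqrt (2 - v ^ 2)‖ := by
            refine (norm_sub_le _ _).trans_eq ?_
            rw [norm_neg, norm_pow, norm_mul, norm_mul, norm_I, one_mul]
        _ < 1 := by nlinarith [norm_nonneg v]
    simpa [sub_eq_add_neg, add_assoc] using mem_slitPlane_of_norm_lt_one h
  have hs : AnalyticAt ℂ (fun v : ℂ => sqrt (2 - v ^ 2)) v :=
    (analyticAt_const.sub (analyticAt_id.pow 2)).cpow analyticAt_const hslit
  exact analyticAt_const.sub (analyticAt_const.mul
    (((analyticAt_const.sub (analyticAt_id.pow 2)).sub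
      ((analyticAt_const.mul analyticAt_id).mul hs)).clog hq))

theorem arccosSqSubOne_zero : arccosSqSubOne 0 = π := by simp [arccosSqSubOne]

theorem hasDerivAt_arccosSqSubOne_zero : HasDerivAt arccosSqSubOne (-√2) 0 := by
  have hsqrt2 : sqrt 2 = √2 := by simpa using sqrt_ofReal (x := 2) (by norm_num)
  have hs := (hasDerivAt_sqrt (by simp)).comp (0 : ℂ) ((hasDerivAt_pow 2 (0 : ℂ)).const_sub 2)
  have hv : HasDerivAt (fun v : ℂ => I * v) I 0 := by
    simpa using (hasDerivAt_id (0 : ℂ)).const_mul I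
  have hq : HasDerivAt (fun v : ℂ => 1 - v ^ 2 - I * v * sqrt (2 - v ^ 2)) (-(I * √2)) 0 :=
    (((hasDerivAt_pow 2 (0 : ℂ)).const_sub 1).fun_sub (hv.fun_mul hs)).congr_deriv
      (by simp [hsqrt2])
  refine (((hq.clog (by simp)).const_mul I).const_sub (π : ℂ)).congr_deriv ?_
  simp only [ne_eq, OfNat.ofNat_ne_zero, not_false_eq_true, zero_pow, sub_zero, mul_zero]
  linear_combination (√2 : ℂ) * I_sq

theorem mem_cutC_iff {z : ℂ} : z ∈ cutC ↔ 1 + z ∈ slitPlane := by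
  change ¬(z.im = 0 ∧ z.re ≤ -1) ↔ _
  rw [mem_slitPlane_iff, add_re, add_im, one_re, one_im, zero_add]
  by_cases h : z.im = 0 <;> simp only [h, true_and, not_le, ne_eq, not_true_eq_false, or_false,
    false_and, not_false_eq_true, or_true]
  constructor <;> intro <;> linarith

theorem isOpen_cutC : IsOpen cutC := by
  have h : cutC = (fun z => 1 + z) ⁻¹' slitPlane := Set.ext fun _ => mem_cutC_iff
  rw [h]
  exact isOpen_slitPlane.preimage (continuous_const.add continuous_id)

theorem sq_sub_one_mem_cutC {v : ℂ} (hv : 0 < v.re) : v ^ 2 - 1 ∈ cutC := by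
  rw [mem_cutC_iff, add_sub_cancel, mem_slitPlane_iff, sq, mul_re, mul_im]
  by_cases h : v.im = 0
  · left
    simp [h, hv]
  · right
    rw [mul_comm v.im, ← two_mul]
    exact mul_ne_zero two_ne_zero (mul_ne_zero hv.ne' h)

theorem IsChebyshev.eventually_eq_cos_arccosSqSubOne {a : ℝ} {T : ℂ → ℂ}
    (hT : IsChebyshev a T) :
    ∀ᶠ z in 𝓝[cutC] (-1), T z = cos (a * arccosSqSubOne (sqrt (1 + z))) := by
  set V : Set ℂ := {v | 0 < v.re} ∩ Metric.ball 0 (1 / 4)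
  have hTV : AnalyticOnNhd ℂ (fun v => T (v ^ 2 - 1)) V := fun v hv =>
    (DifferentiableOn.analyticAt (fun z hz => (hT.1 z hz).differentiableWithinAt)
      (isOpen_cutC.mem_nhds (sq_sub_one_mem_cutC hv.1))).comp (f := fun v : ℂ => v ^ 2 - 1)
      (by fun_prop)
  have hGV : AnalyticOnNhd ℂ (fun v => cos (a * arccosSqSubOne v)) V := fun v hv =>
    analyticAt_cos.comp (analyticAt_const.mul (analyticAt_arccosSqSubOne (by simpa using hv.2)))
  have hreal : ∀ t ∈ Set.Ioo (0 : ℝ) (1 / 4),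
      T ((t : ℂ) ^ 2 - 1) = cos (a * arccosSqSubOne t) := by
    intro t ⟨ht0, ht1⟩
    rw [arccosSqSubOne_ofReal ht0.le (by nlinarith), ← ofReal_mul, ← ofReal_cos]
    exact_mod_cast hT.2 _ ⟨by nlinarith, by nlinarith⟩
  have hfreq : ∃ᶠ v in 𝓝[≠] ((1 / 8 : ℝ) : ℂ), T (v ^ 2 - 1) = cos (a * arccosSqSubOne v) := by
    have hlim : Tendsto ((↑) : ℝ → ℂ) (𝓝[≠] (1 / 8)) (𝓝[≠] ((1 / 8 : ℝ) : ℂ)) :=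
      continuous_ofReal.continuousWithinAt.tendsto_nhdsWithin fun _ ht ↦ ofReal_injective.ne ht
    have hIoo : ∀ᶠ t in 𝓝[≠] (1 / 8 : ℝ), t ∈ Set.Ioo (0 : ℝ) (1 / 4) :=
      eventually_nhdsWithin_of_eventually_nhds (Ioo_mem_nhds (by norm_num) (by norm_num))
    exact hlim.frequently (hIoo.mono hreal).frequently
  have hV : ((1 / 8 : ℝ) : ℂ) ∈ V := by
    refine ⟨?_, ?_⟩ <;> norm_num
  have hagree := hTV.eqOn_of_preconnected_of_frequently_eq hGV
    ((convex_halfSpace_re_gt 0).inter (convex_ball 0 _)).isPreconnected hV hfreq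
  filter_upwards [self_mem_nhdsWithin,
    nhdsWithin_le_nhds (Metric.ball_mem_nhds (-1 : ℂ) (by norm_num : (0 : ℝ) < 1 / 16))]
    with z hz hball
  have hnorm : ‖sqrt (1 + z)‖ ^ 2 < (1 / 4) ^ 2 := by
    rw [← norm_pow, sqrt_sq, show ((1 : ℝ) / 4) ^ 2 = 1 / 16 by norm_num]
    simpa [dist_eq, add_comm] using hball
  have hmem : sqrt (1 + z) ∈ V :=
    ⟨sqrt_re_pos (mem_cutC_iff.mp hz),
      by simpa using lt_of_pow_lt_pow_left₀ 2 (by norm_num) hnorm⟩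
  simpa [sqrt_sq] using hagree hmem

theorem IsChebyshev.isBigO_sub_sub_sqrt {a : ℝ} {T : ℂ → ℂ} (hT : IsChebyshev a T) :
    (fun z => T z - Real.cos (a * π) - (√2 * a * Real.sin (a * π) : ℝ) * sqrt (1 + z))
      =O[𝓝[cutC] (-1)] fun z => 1 + z := by
  set G : ℂ → ℂ := fun v => cos (a * arccosSqSubOne v)
  have hG : AnalyticAt ℂ G 0 :=
    analyticAt_cos.comp (analyticAt_const.mul (analyticAt_arccosSqSubOne (by simp)))
  have hG' : HasDerivAt G (√2 * a * Real.sin (a * π) : ℝ) 0 := by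
    refine (hasDerivAt_arccosSqSubOne_zero.const_mul (a : ℂ)).ccos.congr_deriv ?_
    rw [arccosSqSubOne_zero]
    push_cast
    ring
  have hG0 : G 0 = Real.cos (a * π) := by
    simp only [G, arccosSqSubOne_zero]
    push_cast
    rfl
  have htaylor := hG.isBigO_sub_sub_smul_deriv
  rw [hG'.deriv, hG0] at htaylor
  have hv : Tendsto (fun z => sqrt (1 + z)) (𝓝[cutC] (-1)) (𝓝 0) :=
    tendsto_sqrt_zero.comp (((continuous_const.add continuous_id).tendsto' (-1 : ℂ) 0
      (by norm_num)).mono_left nhdsWithin_le_nhds)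
  refine (htaylor.comp_tendsto hv).congr' ?_ (Eventually.of_forall fun z => ?_)
  · filter_upwards [hT.eventually_eq_cos_arccosSqSubOne] with z hz
    simp only [Function.comp_apply, G, hz, sub_zero, smul_eq_mul]
    ring
  · simp [sqrt_sq]

theorem one_add_chiMap {p m : ℝ} (h : m ≠ p) (θ : ℂ) :
    1 + chiMap p m θ = ((2 / (p - m) : ℝ) : ℂ) * (p - θ) := by
  have hpm : (p : ℂ) - m ≠ 0 := sub_ne_zero.mpr (ofReal_injective.ne h.symm)
  rw [chiMap]
  push_cast
  field_simp
  ring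

theorem tendsto_chiMap {p m : ℝ} (h : m < p) :
    Tendsto (chiMap p m) (𝓝[{z : ℂ | z.im = 0 ∧ p ≤ z.re}ᶜ] (p : ℂ)) (𝓝[cutC] (-1)) := by
  have hk : 0 < 2 / (p - m) := div_pos two_pos (sub_pos.mpr h)
  have hchi : chiMap p m = fun θ => -1 + ((2 / (p - m) : ℝ) : ℂ) * (p - θ) := by
    ext θ
    rw [← one_add_chiMap h.ne]
    ring
  refine tendsto_nhdsWithin_iff.mpr ⟨?_, eventually_nhdsWithin_of_forall fun θ hθ => ?_⟩
  · rw [hchi]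
    exact ((by fun_prop : Continuous fun θ : ℂ => -1 + ((2 / (p - m) : ℝ) : ℂ) * (p - θ)).tendsto'
      _ _ (by simp)).mono_left nhdsWithin_le_nhds
  · rw [mem_cutC_iff, one_add_chiMap h.ne, ofReal_mul_mem_slitPlane_iff hk]
    exact ofReal_sub_mem_slitPlane_iff.mpr hθ

theorem IsChebyshev.isBigO_comp_chiMap {a : ℝ} {T : ℂ → ℂ} (hT : IsChebyshev a T) {p m : ℝ}
    (h : m < p) :
    (fun θ => T (chiMap p m θ) - Real.cos (a * π)
        - (2 * a * Real.sin (a * π) / √(p - m) : ℝ) * sqrt (p - θ))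
      =O[𝓝[{z : ℂ | z.im = 0 ∧ p ≤ z.re}ᶜ] (p : ℂ)] fun θ => θ - p := by
  have hk : 0 < 2 / (p - m) := div_pos two_pos (sub_pos.mpr h)
  have hcoef : ((√2 * a * Real.sin (a * π) : ℝ) : ℂ) * (√(2 / (p - m)) : ℝ)
      = (2 * a * Real.sin (a * π) / √(p - m) : ℝ) := by
    rw [← ofReal_mul, Real.sqrt_div' 2 (sub_pos.mpr h).le]
    congr 1
    field_simp
    rw [Real.sq_sqrt zero_le_two]
    ring
  refine ((hT.isBigO_sub_sub_sqrt.comp_tendsto (tendsto_chiMap h)).congr (fun θ => ?_)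
    (fun θ => one_add_chiMap h.ne θ)).trans ?_
  · rw [Function.comp_apply, one_add_chiMap h.ne, sqrt_ofReal_mul hk, ← mul_assoc, hcoef]
  · exact ((isBigO_refl _ _).const_mul_left (-((2 / (p - m) : ℝ) : ℂ))).congr_left
      fun θ => by ring

theorem isBigO_div_sub_div_add_mul {α 𝕜 : Type*} [NormedField 𝕜] {l : Filter α}
    {N W R s : α → 𝕜} {N₀ W₀ K : 𝕜} (hW₀ : W₀ ≠ 0)
    (hN : (fun x => N x - N₀) =O[l] s) (hW : (fun x => W x - W₀ - K * R x) =O[l] s)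
    (hR : Tendsto R l (𝓝 0)) (hR2 : (fun x => R x ^ 2) =O[l] s) (hs : Tendsto s l (𝓝 0)) :
    (fun x => N x / W x - N₀ / W₀ + N₀ * K / W₀ ^ 2 * R x) =O[l] s := by
  set E := fun x => W x - W₀ - K * R x
  have hW_lim : Tendsto W l (𝓝 W₀) := by
    have h := ((hW.trans_tendsto hs).add (hR.const_mul K)).add_const W₀
    simp only [mul_zero, add_zero, zero_add] at h
    exact h.congr fun x => by simp only [E]; ring
  have hRE : (fun x => R x * E x) =O[l] s := by
    simpa using (hR.isBigO_one 𝕜).mul hW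
  have hnum : (fun x => W₀ ^ 2 * (N x - N₀) - N₀ * W₀ * E x + N₀ * K ^ 2 * R x ^ 2
      + N₀ * K * (R x * E x)) =O[l] s :=
    (((hN.const_mul_left _).sub (hW.const_mul_left _)).add (hR2.const_mul_left _)).add
      (hRE.const_mul_left _)
  refine ((hnum.mul ((hW_lim.inv₀ hW₀).isBigO_one 𝕜)).const_mul_left (W₀ ^ 2)⁻¹).congr' ?_
    (Eventually.of_forall fun x => mul_one _)
  filter_upwards [hW_lim.eventually_ne hW₀] with x hx
  simp only [E]
  field_simp
  ring

theorem stmt17_general (σ11 σ12 σ22 μ1 μ2 : ℝ)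
    (hdet : 0 < σ11 * σ22 - σ12 ^ 2)
    (hμ1 : μ1 < 0)
    (θ2p θ2m β : ℝ)
    (hθ2p : θ2p = ((μ1 * σ12 - μ2 * σ11) +
      Real.sqrt ((μ1 * σ12 - μ2 * σ11) ^ 2 + μ1 ^ 2 * (σ11 * σ22 - σ12 ^ 2))) /
      (σ11 * σ22 - σ12 ^ 2))
    (hθ2m : θ2m = ((μ1 * σ12 - μ2 * σ11) -
      Real.sqrt ((μ1 * σ12 - μ2 * σ11) ^ 2 + μ1 ^ 2 * (σ11 * σ22 - σ12 ^ 2))) /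
      (σ11 * σ22 - σ12 ^ 2))
    (T : ℂ → ℂ) (hT : IsChebyshev (Real.pi / β) T)
    (w : ℂ → ℂ) (hw : w = fun θ => T (chiMap θ2p θ2m θ))
    (wθ2p : ℂ) (hwθ2p : wθ2p = ((Real.cos (Real.pi / β * Real.pi) : ℝ) : ℂ))
    (hne : wθ2p ≠ w 0)
    (w'0 : ℂ)
    (φ1 : ℂ → ℂ) (hφ1 : φ1 = fun θ => -(μ1 : ℂ) * w'0 * θ / (w θ - w 0))
    (φ1p : ℂ) (hφ1p : φ1p = -(μ1 : ℂ) * w'0 * (θ2p : ℂ) / (wθ2p - w 0))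
    (C1 : ℂ) (hC1 : C1 = -φ1p * 2 * ((Real.pi / β : ℝ) : ℂ) *
      ((Real.sin (Real.pi / β * Real.pi) : ℝ) : ℂ) /
      ((wθ2p - w 0) * ((Real.sqrt (θ2p - θ2m) : ℝ) : ℂ))) :
    (fun θ : ℂ => φ1 θ - φ1p - C1 * (((θ2p : ℂ) - θ) ^ ((1 : ℂ) / 2)))
      =O[nhdsWithin (θ2p : ℂ) ({z : ℂ | z.im = 0 ∧ θ2p ≤ z.re}ᶜ : Set ℂ)]
      (fun θ : ℂ => θ - (θ2p : ℂ)) := by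
  have hθ : θ2m < θ2p := by
    have hdisc : 0 < √((μ1 * σ12 - μ2 * σ11) ^ 2 + μ1 ^ 2 * (σ11 * σ22 - σ12 ^ 2)) :=
      Real.sqrt_pos.mpr (by nlinarith [sq_nonneg (μ1 * σ12 - μ2 * σ11), sq_pos_of_neg hμ1])
    rw [hθ2p, hθ2m]
    exact div_lt_div_of_pos_right (by linarith) hdet
  set l := 𝓝[{z : ℂ | z.im = 0 ∧ θ2p ≤ z.re}ᶜ] (θ2p : ℂ)
  set R : ℂ → ℂ := fun θ => sqrt (θ2p - θ)
  set K : ℂ := ((2 * (Real.pi / β) * Real.sin (Real.pi / β * Real.pi) / √(θ2p - θ2m) : ℝ) : ℂ)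
  have hs : Tendsto (fun θ : ℂ => θ - θ2p) l (𝓝 0) :=
    ((continuous_id.sub continuous_const).tendsto' _ _ (sub_self _)).mono_left nhdsWithin_le_nhds
  have hR : Tendsto R l (𝓝 0) := tendsto_sqrt_zero.comp (by simpa using hs.neg)
  have hR2 : (fun θ => R θ ^ 2) =O[l] fun θ => θ - θ2p :=
    (isBigO_refl _ _).neg_left.congr_left fun θ => by rw [sqrt_sq, neg_sub]
  have hN : (fun θ => -(μ1 : ℂ) * w'0 * θ - -(μ1 : ℂ) * w'0 * θ2p) =O[l] fun θ => θ - θ2p :=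
    ((isBigO_refl _ _).const_mul_left (-(μ1 : ℂ) * w'0)).congr_left fun θ => by ring
  have hW : (fun θ => (w θ - w 0) - (wθ2p - w 0) - K * R θ) =O[l] fun θ => θ - θ2p := by
    subst hw hwθ2p
    exact (hT.isBigO_comp_chiMap hθ).congr_left fun θ => by ring
  have hW₀ : wθ2p - w 0 ≠ 0 := sub_ne_zero.mpr hne
  refine (isBigO_div_sub_div_add_mul hW₀ hN hW hR hR2 hs).congr_left fun θ => ?_
  rw [hφ1, hC1, hφ1p, one_div, ← sqrt]
  simp only [K, R]
  push_cast
  field_simp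
  ring

/-- Singular expansion of `φ₁` at `θ₂⁺` when `π/β ∉ ℤ` and `w(θ₂⁺) ≠ w(0)`:
`φ₁(θ₂) = φ₁(θ₂⁺) + C₁ √(θ₂⁺ − θ₂) + O(θ₂ − θ₂⁺)`. -/
theorem stmt17 (σ11 σ12 σ22 μ1 μ2 : ℝ)
    (h11 : 0 < σ11) (h22 : 0 < σ22) (hdet : 0 < σ11 * σ22 - σ12 ^ 2)
    (hμ1 : μ1 < 0) (hμ2 : μ2 < 0)
    (θ2p θ2m β : ℝ)
    (hθ2p : θ2p = ((μ1 * σ12 - μ2 * σ11) +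
      Real.sqrt ((μ1 * σ12 - μ2 * σ11) ^ 2 + μ1 ^ 2 * (σ11 * σ22 - σ12 ^ 2))) /
      (σ11 * σ22 - σ12 ^ 2))
    (hθ2m : θ2m = ((μ1 * σ12 - μ2 * σ11) -
      Real.sqrt ((μ1 * σ12 - μ2 * σ11) ^ 2 + μ1 ^ 2 * (σ11 * σ22 - σ12 ^ 2))) /
      (σ11 * σ22 - σ12 ^ 2))
    (hβ : β = Real.arccos (-σ12 / Real.sqrt (σ11 * σ22)))
    (T : ℂ → ℂ) (hT : IsChebyshev (Real.pi / β) T)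
    (w : ℂ → ℂ) (hw : w = fun θ => T (chiMap θ2p θ2m θ))
    (hnint : ¬∃ n : ℤ, Real.pi / β = (n : ℝ))
    (wθ2p : ℂ) (hwθ2p : wθ2p = ((Real.cos (Real.pi / β * Real.pi) : ℝ) : ℂ))
    (hne : wθ2p ≠ w 0)
    (w'0 : ℂ) (hw'0 : w'0 = deriv w 0)
    (φ1 : ℂ → ℂ) (hφ1 : φ1 = fun θ => -(μ1 : ℂ) * w'0 * θ / (w θ - w 0))
    (φ1p : ℂ) (hφ1p : φ1p = -(μ1 : ℂ) * w'0 * (θ2p : ℂ) / (wθ2p - w 0))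
    (C1 : ℂ) (hC1 : C1 = -φ1p * 2 * ((Real.pi / β : ℝ) : ℂ) *
      ((Real.sin (Real.pi / β * Real.pi) : ℝ) : ℂ) /
      ((wθ2p - w 0) * ((Real.sqrt (θ2p - θ2m) : ℝ) : ℂ))) :
    (fun θ : ℂ => φ1 θ - φ1p - C1 * (((θ2p : ℂ) - θ) ^ ((1 : ℂ) / 2)))
      =O[nhdsWithin (θ2p : ℂ) ({z : ℂ | z.im = 0 ∧ θ2p ≤ z.re}ᶜ : Set ℂ)]
      (fun θ : ℂ => θ - (θ2p : ℂ)) :=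
  stmt17_general σ11 σ12 σ22 μ1 μ2 hdet hμ1 θ2p θ2m β hθ2p hθ2m T hT w hw wθ2p hwθ2p hne w'0 φ1 hφ1
    φ1p hφ1p C1 hC1
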